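/- arXiv:cs/0702053 — 2 statements merged into one kernel-verified Lean document; each statement's English description precedes it below -/
import Mathlib

section
/- If D and D' are f-minimal DFAs over the same alphabet whose languages are finitely different, then their finite parts are isomorphic up to acceptance: there is a bijection f: F(D) → F(D') such that for all p, q ∈ F(D) and c ∈ Σ, δ(p,c) = q implies δ'(f(p),c) = f(q). -/
open Set

/-- Symmetric difference of two languages, as a set of words. -/
def symmDiffL {α : Type} (L L' : Language α) : Set (List α) :=
  {w | (w ∈ L ∧ w ∉ L') ∨ (w ∈ L' ∧ w ∉ L)}

/-- Two languages are finitely different if their symmetric difference is finite. -/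
def FinDiff {α : Type} (L L' : Language α) : Prop := (symmDiffL L L').Finite

/-- The set of words that drive the DFA from its start state to state `q`. -/
def DFA.reachedBy {α σ : Type} (D : DFA α σ) (q : σ) : Set (List α) :=
  {w | D.eval w = q}

/-- The infinite part of a DFA: states reached by infinitely many words. -/
def DFA.infinitePart {α σ : Type} (D : DFA α σ) : Set σ :=
  {q | (D.reachedBy q).Infinite}

/-- The finite part of a DFA: states reached by only finitely many words. -/
def DFA.finitePart {α σ : Type} (D : DFA α σ) : Set σ :=
  {q | (D.reachedBy q).Finite}

/-- The language induced by state `q` of DFA `D`. -/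
def DFA.langOf {α σ : Type} (D : DFA α σ) (q : σ) : Language α :=
  {w | D.evalFrom q w ∈ D.accept}

/-- A DFA is minimized if all states are reachable and distinct states
induce distinct languages. -/
def DFA.Minimized {α σ : Type} (D : DFA α σ) : Prop :=
  (∀ q, ∃ w, D.eval w = q) ∧ ∀ p q : σ, D.langOf p = D.langOf q → p = q

/-- Two DFAs have isomorphic infinite parts. -/
def InfIso {α σ σ' : Type} (D : DFA α σ) (D' : DFA α σ') : Prop :=
  ∃ f : σ → σ', Set.BijOn f D.infinitePart D'.infinitePart ∧
    (∀ q ∈ D.infinitePart, q ∈ D.accept ↔ f q ∈ D'.accept) ∧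
    (∀ q ∈ D.infinitePart, ∀ c : α, f (D.step q c) = D'.step (f q) c)

/-- `S(D)`: the set of finite-difference classes of languages induced by states of `D`,
each class represented as the set of languages finitely different from the inducing one. -/
def SClasses {α σ : Type} (D : DFA α σ) : Set (Set (Language α)) :=
  {C | ∃ q : σ, C = {L | FinDiff (D.langOf q) L}}

/-- A DFA is f-minimal if no DFA recognizing a finitely different language has
fewer states. -/
def FMinimal {α σ : Type} [Fintype σ] (D : DFA α σ) : Prop :=
  ∀ (σ' : Type) (_ : Fintype σ') (D' : DFA α σ'),
    FinDiff D.accepts D'.accepts → Fintype.card σ ≤ Fintype.card σ'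


section AuxProof

variable {α σ σ' : Type}

private lemma symmDiffL_comm (L L' : Language α) : symmDiffL L L' = symmDiffL L' L := by
  ext w; simp only [symmDiffL, Set.mem_setOf_eq]; tauto

private lemma FinDiff.symm' {L L' : Language α} (h : FinDiff L L') : FinDiff L' L := by
  unfold FinDiff at *; rwa [symmDiffL_comm]

private lemma FinDiff.trans' {L1 L2 L3 : Language α} (h1 : FinDiff L1 L2)
    (h2 : FinDiff L2 L3) : FinDiff L1 L3 := by
  apply (h1.union h2).subset
  intro w hw
  simp only [symmDiffL, Set.mem_setOf_eq, Set.mem_union] at *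
  tauto

/-- The DFA obtained from `D` by deleting state `r` and redirecting all
transitions into `r` to `s` instead. -/
private noncomputable def mergeDFA (D : DFA α σ) (r s : σ) (h : s ≠ r) :
    DFA α {x : σ // x ≠ r} :=
  haveI := Classical.decEq σ
  { step := fun x c => if hc : D.step x.1 c = r then ⟨s, h⟩ else ⟨D.step x.1 c, hc⟩
    start := if hc : D.start = r then ⟨s, h⟩ else ⟨D.start, hc⟩
    accept := {x | x.1 ∈ D.accept} }

private lemma mergeDFA_step_eq (D : DFA α σ) (r s : σ) (h : s ≠ r) (x : {x : σ // x ≠ r})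
    (c : α) (hc : D.step x.1 c = r) : (mergeDFA D r s h).step x c = ⟨s, h⟩ := by
  simp only [mergeDFA]
  rw [dif_pos hc]

private lemma mergeDFA_step_ne (D : DFA α σ) (r s : σ) (h : s ≠ r) (x : {x : σ // x ≠ r})
    (c : α) (hc : D.step x.1 c ≠ r) : (mergeDFA D r s h).step x c = ⟨D.step x.1 c, hc⟩ := by
  simp only [mergeDFA]
  rw [dif_neg hc]

private lemma mergeDFA_start_eq (D : DFA α σ) (r s : σ) (h : s ≠ r)
    (hc : D.start = r) : (mergeDFA D r s h).start = ⟨s, h⟩ := by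
  simp only [mergeDFA]
  rw [dif_pos hc]

private lemma mergeDFA_start_ne (D : DFA α σ) (r s : σ) (h : s ≠ r)
    (hc : D.start ≠ r) : (mergeDFA D r s h).start = ⟨D.start, hc⟩ := by
  simp only [mergeDFA]
  rw [dif_neg hc]

private lemma mergeDFA_eval (D : DFA α σ) (r s : σ) (h : s ≠ r)
    (hnost : ∀ v, D.evalFrom s v ≠ r) (w : List α) :
    ((∀ u, u <+: w → D.eval u ≠ r) ∧ ((mergeDFA D r s h).eval w).1 = D.eval w) ∨
    (∃ u v, w = u ++ v ∧ D.eval u = r ∧ ((mergeDFA D r s h).eval w).1 = D.evalFrom s v) := by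
  induction w using List.reverseRecOn with
  | nil =>
    by_cases hs : D.start = r
    · right
      refine ⟨[], [], rfl, by simpa using hs, ?_⟩
      show ((mergeDFA D r s h).start).1 = D.evalFrom s []
      rw [mergeDFA_start_eq D r s h hs]
      simp
    · left
      constructor
      · intro u hu
        rw [List.prefix_nil.mp hu]
        simpa using hs
      · show ((mergeDFA D r s h).start).1 = D.start
        rw [mergeDFA_start_ne D r s h hs]
  | append_singleton w c ih =>
    rcases ih with ⟨hpre, heq⟩ | ⟨u, v, rfl, hu, hv⟩
    · by_cases hc : D.eval (w ++ [c]) = r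
      · right
        refine ⟨w ++ [c], [], (List.append_nil _).symm, hc, ?_⟩
        have hstep : D.step (((mergeDFA D r s h).eval w)).1 c = r := by
          rw [heq, ← DFA.eval_append_singleton]; exact hc
        rw [DFA.eval_append_singleton, mergeDFA_step_eq D r s h _ c hstep]
        simp
      · left
        have hstep : D.step (((mergeDFA D r s h).eval w)).1 c ≠ r := by
          rw [heq, ← DFA.eval_append_singleton]; exact hc
        constructor
        · intro u hu
          rcases List.prefix_concat_iff.mp hu with h1 | h1
          · rw [h1]; exact hc
          · exact hpre u h1
        · rw [DFA.eval_append_singleton, mergeDFA_step_ne D r s h _ c hstep]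
          simp [heq]
    · right
      have hstep : D.step (((mergeDFA D r s h).eval (u ++ v))).1 c ≠ r := by
        rw [hv, ← DFA.evalFrom_append_singleton]; exact hnost _
      refine ⟨u, v ++ [c], by rw [List.append_assoc], hu, ?_⟩
      rw [DFA.eval_append_singleton, mergeDFA_step_ne D r s h _ c hstep]
      show D.step ((mergeDFA D r s h).eval (u ++ v)).1 c = D.evalFrom s (v ++ [c])
      rw [hv, DFA.evalFrom_append_singleton]

private lemma merge_contra [Fintype σ] (D : DFA α σ) (hD : FMinimal D) (r s : σ)
    (h : s ≠ r) (hnost : ∀ v, D.evalFrom s v ≠ r)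
    (hfin : (Set.image2 (· ++ ·) (D.reachedBy r)
      (symmDiffL (D.langOf r) (D.langOf s))).Finite) : False := by
  classical
  have hsub : symmDiffL D.accepts (mergeDFA D r s h).accepts ⊆
      Set.image2 (· ++ ·) (D.reachedBy r) (symmDiffL (D.langOf r) (D.langOf s)) := by
    intro w hw
    rcases mergeDFA_eval D r s h hnost w with ⟨_, heq⟩ | ⟨u, v, rfl, hu, hv⟩
    · exfalso
      have h1 : w ∈ D.accepts ↔ D.eval w ∈ D.accept := D.mem_accepts
      have h2 : w ∈ (mergeDFA D r s h).accepts ↔ ((mergeDFA D r s h).eval w).1 ∈ D.accept := Iff.rfl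
      rw [heq] at h2
      simp only [symmDiffL, Set.mem_setOf_eq] at hw
      tauto
    · have hwL : u ++ v ∈ D.accepts ↔ v ∈ D.langOf r := by
        rw [DFA.mem_accepts]
        show D.evalFrom D.start (u ++ v) ∈ D.accept ↔ _
        rw [DFA.evalFrom_of_append]
        rw [show D.evalFrom D.start u = r from hu]
        rfl
      have hwL0 : u ++ v ∈ (mergeDFA D r s h).accepts ↔ v ∈ D.langOf s := by
        rw [DFA.mem_accepts]
        show ((mergeDFA D r s h).eval (u ++ v)).1 ∈ D.accept ↔ _
        rw [hv]
        rfl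
      refine Set.mem_image2.mpr ⟨u, hu, v, ?_, rfl⟩
      simp only [symmDiffL, Set.mem_setOf_eq] at hw ⊢
      tauto
  have hFD : FinDiff D.accepts (mergeDFA D r s h).accepts := hfin.subset hsub
  have hle := hD _ inferInstance (mergeDFA D r s h) hFD
  have hlt : Fintype.card {x : σ // x ≠ r} < Fintype.card σ :=
    Fintype.card_subtype_lt (x := r) (by simp)
  omega

private lemma fminimal_reach [Fintype σ] (D : DFA α σ) (hD : FMinimal D) (q : σ) :
    ∃ w, D.eval w = q := by
  by_contra hq
  push_neg at hq
  have hs : D.start ≠ q := by simpa using hq []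
  have hempty : D.reachedBy q = ∅ :=
    Set.eq_empty_iff_forall_notMem.mpr fun w hw => hq w hw
  refine merge_contra D hD q D.start hs (fun v => hq v) ?_
  rw [hempty]
  simp

private lemma claimB [Fintype σ] (D : DFA α σ) (hD : FMinimal D) (p q : σ)
    (hp : p ∈ D.finitePart) (hpq : FinDiff (D.langOf p) (D.langOf q)) : p = q := by
  by_contra hne
  by_cases hqp : ∃ v, D.evalFrom q v = p
  · obtain ⟨v₀, hv₀⟩ := hqp
    have hv₀ne : v₀ ≠ [] := by
      rintro rfl
      have hqq : q = p := by simpa using hv₀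
      exact hne hqq.symm
    have hqfin : (D.reachedBy q).Finite := by
      by_contra hinf
      have himg : (fun u : List α => u ++ v₀) '' D.reachedBy q ⊆ D.reachedBy p := by
        rintro _ ⟨u, hu, rfl⟩
        show D.eval (u ++ v₀) = p
        show D.evalFrom D.start (u ++ v₀) = p
        rw [DFA.evalFrom_of_append, show D.evalFrom D.start u = q from hu, hv₀]
      have hinfim : ((fun u : List α => u ++ v₀) '' D.reachedBy q).Infinite :=
        Set.Infinite.image ((List.append_left_injective v₀).injOn) hinf
      exact (hinfim.mono himg) hp
    have hno_pq : ∀ v, D.evalFrom p v ≠ q := by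
      intro v₁ hv₁
      obtain ⟨w₀, hw₀⟩ := fminimal_reach D hD p
      have hcyc : D.evalFrom p (v₁ ++ v₀) = p := by
        rw [DFA.evalFrom_of_append, hv₁, hv₀]
      have hlen : (v₁ ++ v₀).length ≠ 0 := by simp [hv₀ne]
      have hiterFrom : ∀ k : ℕ, D.evalFrom p (List.replicate k (v₁ ++ v₀)).flatten = p := by
        intro k
        induction k with
        | zero => simp
        | succ n ihn =>
          rw [List.replicate_succ, List.flatten_cons, DFA.evalFrom_of_append, hcyc, ihn]
      have hiter : ∀ k : ℕ, D.eval (w₀ ++ (List.replicate k (v₁ ++ v₀)).flatten) = p := by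
        intro k
        show D.evalFrom D.start _ = p
        rw [DFA.evalFrom_of_append, show D.evalFrom D.start w₀ = p from hw₀]
        exact hiterFrom k
      have hinjf : Function.Injective
          (fun k : ℕ => w₀ ++ (List.replicate k (v₁ ++ v₀)).flatten) := by
        intro a b hab
        have hl := congrArg List.length hab
        simp only [List.length_append, List.length_flatten, List.map_replicate,
          List.sum_replicate, smul_eq_mul] at hl
        have hpos : 0 < v₁.length + v₀.length := by
          have := List.length_pos_iff.mpr hv₀ne
          omega
        have hab2 : a * (v₁.length + v₀.length) = b * (v₁.length + v₀.length) := by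
          omega
        exact Nat.eq_of_mul_eq_mul_right hpos hab2
      exact (Set.infinite_of_injective_forall_mem hinjf fun k => hiter k) hp
    refine merge_contra D hD q p hne hno_pq ?_
    refine Set.Finite.image2 _ hqfin ?_
    have := hpq.symm'
    unfold FinDiff at this
    exact this
  · push_neg at hqp
    exact merge_contra D hD p q (Ne.symm hne) hqp (Set.Finite.image2 _ hp hpq)

private lemma findiff_deriv (D : DFA α σ) (D' : DFA α σ')
    (h : FinDiff D.accepts D'.accepts) (w : List α) :
    FinDiff (D.langOf (D.eval w)) (D'.langOf (D'.eval w)) := by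
  have hsub : symmDiffL (D.langOf (D.eval w)) (D'.langOf (D'.eval w)) ⊆
      (fun v => w ++ v) ⁻¹' symmDiffL D.accepts D'.accepts := by
    intro v hv
    have e1 : (w ++ v ∈ D.accepts) ↔ v ∈ D.langOf (D.eval w) := by
      rw [DFA.mem_accepts]
      show D.evalFrom D.start (w ++ v) ∈ D.accept ↔ _
      rw [DFA.evalFrom_of_append]
      rfl
    have e2 : (w ++ v ∈ D'.accepts) ↔ v ∈ D'.langOf (D'.eval w) := by
      rw [DFA.mem_accepts]
      show D'.evalFrom D'.start (w ++ v) ∈ D'.accept ↔ _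
      rw [DFA.evalFrom_of_append]
      rfl
    simp only [symmDiffL, Set.mem_setOf_eq, Set.mem_preimage] at hv ⊢
    tauto
  exact (Set.Finite.preimage ((List.append_right_injective w).injOn) h).subset hsub

private lemma transfer (D : DFA α σ) (D' : DFA α σ')
    (h : FinDiff D.accepts D'.accepts) {w v : List α} (hwv : D.eval w = D.eval v) :
    FinDiff (D'.langOf (D'.eval w)) (D'.langOf (D'.eval v)) := by
  have h1 := (findiff_deriv D D' h w).symm'
  have h2 := findiff_deriv D D' h v
  rw [hwv] at h1
  exact h1.trans' h2

private lemma claimC [Fintype σ] (D : DFA α σ) (D' : DFA α σ')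
    (hD : FMinimal D) (h : FinDiff D.accepts D'.accepts) (w : List α)
    (hw : D.eval w ∈ D.finitePart) : D'.eval w ∈ D'.finitePart := by
  have hsub : D'.reachedBy (D'.eval w) ⊆ D.reachedBy (D.eval w) := by
    intro v hv
    have hv' : D'.eval v = D'.eval w := hv
    have h1 : FinDiff (D.langOf (D.eval v)) (D.langOf (D.eval w)) :=
      transfer D' D h.symm' hv'
    exact (claimB D hD (D.eval w) (D.eval v) hw h1.symm').symm
  exact Set.Finite.subset hw hsub

end AuxProof

/-- f-minimal DFAs of finitely different languages have finite
parts isomorphic up to acceptance. -/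
theorem finitePart_iso_of_fminimal {α σ σ' : Type} [Fintype σ] [Fintype σ']
    (D : DFA α σ) (D' : DFA α σ')
    (hD : FMinimal D) (hD' : FMinimal D')
    (h : FinDiff D.accepts D'.accepts) :
    ∃ f : σ → σ', Set.BijOn f D.finitePart D'.finitePart ∧
      ∀ p ∈ D.finitePart, ∀ q ∈ D.finitePart, ∀ c : α,
        D.step p c = q → D'.step (f p) c = f q := by
  have hreach := fminimal_reach D hD
  have hreach' := fminimal_reach D' hD'
  have hW : ∀ w v : List α, D.eval w = D.eval v → D.eval w ∈ D.finitePart →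
      D'.eval w = D'.eval v := by
    intro w v hwv hw
    exact claimB D' hD' (D'.eval w) (D'.eval v) (claimC D D' hD h w hw)
      (transfer D D' h hwv)
  have hW' : ∀ w v : List α, D'.eval w = D'.eval v → D'.eval w ∈ D'.finitePart →
      D.eval w = D.eval v := by
    intro w v hwv hw
    exact claimB D hD (D.eval w) (D.eval v) (claimC D' D hD' h.symm' w hw)
      (transfer D' D h.symm' hwv)
  choose wrep hwrep using hreach
  refine ⟨fun q => D'.eval (wrep q), ⟨?_, ?_, ?_⟩, ?_⟩
  · intro q hq
    exact claimC D D' hD h (wrep q) (by rw [hwrep q]; exact hq)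
  · intro q₁ hq₁ q₂ hq₂ hf
    have h1 : D.eval (wrep q₁) = D.eval (wrep q₂) := by
      apply hW' _ _ hf
      exact claimC D D' hD h (wrep q₁) (by rw [hwrep]; exact hq₁)
    rw [hwrep, hwrep] at h1
    exact h1
  · intro q' hq'
    obtain ⟨w, hw⟩ := hreach' q'
    have hq : D.eval w ∈ D.finitePart :=
      claimC D' D hD' h.symm' w (by rw [hw]; exact hq')
    refine ⟨D.eval w, hq, ?_⟩
    show D'.eval (wrep (D.eval w)) = q'
    rw [← hw]
    exact hW _ _ (by rw [hwrep]) (by rw [hwrep]; exact hq)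
  · intro p hp q hq c hstep
    show D'.step (D'.eval (wrep p)) c = D'.eval (wrep q)
    rw [← DFA.eval_append_singleton]
    have he : D.eval (wrep p ++ [c]) = q := by
      rw [DFA.eval_append_singleton, hwrep, hstep]
    exact (hW (wrep q) (wrep p ++ [c]) (by rw [hwrep, he]) (by rw [hwrep]; exact hq)).symm
end

section
/- If D and D' are minimized DFAs whose languages are finitely different, then D and D' have the same number of states in their infinite parts, and for each finite-difference class C of languages, the number of infinite-part states of D inducing a language in C equals the number of infinite-part states of D' inducing a language in C. -/
open Set

-- prefixes of elements of a finite set form a finite set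
lemma bad_finite {α : Type} {S : Set (List α)} (hS : S.Finite) :
    {u : List α | ∃ w, u ++ w ∈ S}.Finite := by
  have : {u : List α | ∃ w, u ++ w ∈ S} ⊆ ⋃ s ∈ S, (s.take '' Set.Iic s.length) := by
    rintro u ⟨w, hw⟩
    refine Set.mem_biUnion hw ⟨u.length, by simp, ?_⟩
    simp [List.take_left]
  exact Set.Finite.subset (hS.biUnion fun s _ => (Set.finite_Iic _).image _) this

lemma finDiff_symm {α : Type} {L L' : Language α} (h : FinDiff L L') : FinDiff L' L := by
  refine h.subset ?_
  intro w hw; exact hw.symm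

lemma langOf_eval {α σ σ' : Type} (D : DFA α σ) (D' : DFA α σ')
    (u : List α) (hu : u ∉ {u : List α | ∃ w, u ++ w ∈ symmDiffL D.accepts D'.accepts}) :
    D'.langOf (D'.eval u) = D.langOf (D.eval u) := by
  ext w
  have h1 : (u ++ w ∈ D.accepts ↔ u ++ w ∈ D'.accepts) := by
    by_contra hc
    exact hu ⟨w, by tauto⟩
  have e1 : D.eval (u ++ w) = D.evalFrom (D.eval u) w := D.evalFrom_of_append _ _ _
  have e2 : D'.eval (u ++ w) = D'.evalFrom (D'.eval u) w := D'.evalFrom_of_append _ _ _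
  simp only [DFA.langOf, Set.mem_setOf_eq]
  rw [DFA.mem_accepts, DFA.mem_accepts, e1, e2] at h1
  exact h1.symm

/-- main construction: a map on infinite parts preserving langOf -/
lemma exists_map {α σ σ' : Type} (D : DFA α σ) (D' : DFA α σ')
    (hD' : D'.Minimized) (h : FinDiff D.accepts D'.accepts) :
    ∃ f : σ → σ', ∀ q ∈ D.infinitePart,
      f q ∈ D'.infinitePart ∧ D'.langOf (f q) = D.langOf q := by
  classical
  set Bad := {u : List α | ∃ w, u ++ w ∈ symmDiffL D.accepts D'.accepts} with hBad
  have hBadF : Bad.Finite := bad_finite h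
  have hex : ∀ q ∈ D.infinitePart, ∃ u, D.eval u = q ∧ u ∉ Bad := by
    intro q hq
    obtain ⟨u, hu⟩ := ((hq.diff hBadF)).nonempty
    exact ⟨u, hu.1, hu.2⟩
  choose! g hg1 hg2 using hex
  refine ⟨fun q => D'.eval (g q), fun q hq => ?_⟩
  have key : ∀ u, D.eval u = q → u ∉ Bad → D'.eval u = D'.eval (g q) := by
    intro u h1 h2
    apply hD'.2
    rw [langOf_eval D D' u h2, langOf_eval D D' (g q) (hg2 q hq), h1, hg1 q hq]
  constructor
  · have : (D.reachedBy q \ Bad) ⊆ D'.reachedBy (D'.eval (g q)) := by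
      intro u hu; exact key u hu.1 hu.2
    exact ((hq.diff hBadF)).mono this
  · rw [langOf_eval D D' (g q) (hg2 q hq), hg1 q hq]

/-- Minimized DFAs of finitely different languages have the same
number of infinite-part states, in total and within each finite-difference
class of induced languages. -/
theorem infinitePart_card_eq_of_finDiff {α σ σ' : Type} [Fintype σ] [Fintype σ']
    (D : DFA α σ) (D' : DFA α σ')
    (hD : D.Minimized) (hD' : D'.Minimized)
    (h : FinDiff D.accepts D'.accepts) :
    D.infinitePart.ncard = D'.infinitePart.ncard ∧
      ∀ L : Language α,
        {q | q ∈ D.infinitePart ∧ FinDiff (D.langOf q) L}.ncard =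
          {q' | q' ∈ D'.infinitePart ∧ FinDiff (D'.langOf q') L}.ncard := by
  obtain ⟨f, hf⟩ := exists_map D D' hD' h
  obtain ⟨g, hg⟩ := exists_map D' D hD (finDiff_symm h)
  have hfg : ∀ q' ∈ D'.infinitePart, f (g q') = q' := by
    intro q' hq'
    apply hD'.2
    rw [(hf _ (hg q' hq').1).2, (hg q' hq').2]
  have hinj : Set.InjOn f D.infinitePart := by
    intro p hp q hq hpq
    apply hD.2
    rw [← (hf p hp).2, ← (hf q hq).2, hpq]
  constructor
  · have bij : Set.BijOn f D.infinitePart D'.infinitePart := by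
      refine ⟨fun q hq => (hf q hq).1, hinj, fun q' hq' => ⟨g q', (hg q' hq').1, hfg q' hq'⟩⟩
    rw [← bij.image_eq, Set.ncard_image_of_injOn hinj]
  · intro L
    have bij : Set.BijOn f {q | q ∈ D.infinitePart ∧ FinDiff (D.langOf q) L}
        {q' | q' ∈ D'.infinitePart ∧ FinDiff (D'.langOf q') L} := by
      refine ⟨fun q hq => ⟨(hf q hq.1).1, by rw [(hf q hq.1).2]; exact hq.2⟩,
        hinj.mono fun q hq => hq.1, fun q' hq' => ⟨g q', ⟨(hg q' hq'.1).1, ?_⟩, hfg q' hq'.1⟩⟩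
      rw [(hg q' hq'.1).2]; exact hq'.2
    rw [← bij.image_eq, Set.ncard_image_of_injOn (hinj.mono fun q hq => hq.1)]
end
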